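/- arXiv:1310.0703 — 3 statements merged into one kernel-verified Lean document; each statement's English description precedes it below -/
import Mathlib

section
/- Let X be a nonempty set, f : X → X a bijection, δ > 0, and F : X × 𝔻 → 𝔻 such that for each x ∈ X the map w ↦ F(x,w) is holomorphic on the open unit disk 𝔻 with |F(x,w)| ≤ e^{−δ} for all w ∈ 𝔻. Let m : X → 𝔻 satisfy m(f(x)) = F(x, m(x)) for all x ∈ X. Then every bounded function u : X → ℂ satisfies sup_{x∈X} |u(x)| ≤ (1 − e^{−δ})^{-1} · sup_{y∈X} |u(f(y)) − (∂_w F)(y, m(y))·u(y)|, where ∂_w F denotes the complex derivative in the disk variable. -/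
/-!
Along a backward orbit `x = y₀ ← y₁ ← ⋯` of `f`, the hypothesis on `u` unrolls to
`‖u x‖ ≤ C ∑_{k<n} P_k + P_n ‖u (y_n)‖`, where `P_k` is the product of the first `k` derivatives
`‖∂_w F (y_{j+1}, m (y_{j+1}))‖`. The Schwarz–Pick lemma for `F y`, which maps the unit disk into
the disk of radius `r = e^{-δ}`, gives `‖∂_w F(y, w)‖ (r - ‖w‖²) + r (1 - r) ≤ r - ‖F(y, w)‖²`.
With the weights `b_n = r - ‖m (y_n)‖²` this telescopes to `r (1 - r) ∑_{k<n} P_k + P_n b_n ≤ r`,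
so `∑ P_k ≤ (1 - r)⁻¹` and `P_n → 0`.
-/

open ComplexConjugate Filter Metric Set Topology

noncomputable def mobius (a z : ℂ) : ℂ := (a - z) / (1 - conj a * z)

namespace mobius

lemma norm_sq_one_sub_conj_mul_sub_norm_sq (a z : ℂ) :
    ‖1 - conj a * z‖ ^ 2 - ‖a - z‖ ^ 2 = (1 - ‖a‖ ^ 2) * (1 - ‖z‖ ^ 2) := by
  simp only [Complex.sq_norm, Complex.normSq_apply, Complex.sub_re, Complex.sub_im,
    Complex.mul_re, Complex.mul_im, Complex.conj_re, Complex.conj_im, Complex.one_re,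
    Complex.one_im]
  ring

lemma one_sub_conj_mul_ne_zero {a z : ℂ} (ha : ‖a‖ < 1) (hz : ‖z‖ ≤ 1) :
    1 - conj a * z ≠ 0 := by
  have : ‖conj a * z‖ < 1 := by
    rw [norm_mul, Complex.norm_conj]
    nlinarith [norm_nonneg a, norm_nonneg z]
  intro h
  rw [← sub_eq_zero.mp h, norm_one] at this
  exact this.false

lemma norm_le_one {a z : ℂ} (ha : ‖a‖ < 1) (hz : ‖z‖ ≤ 1) : ‖mobius a z‖ ≤ 1 := by
  have hden := norm_pos_iff.mpr (one_sub_conj_mul_ne_zero ha hz)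
  rw [mobius, norm_div, div_le_one hden]
  have := norm_sq_one_sub_conj_mul_sub_norm_sq a z
  have : 0 ≤ (1 - ‖a‖ ^ 2) * (1 - ‖z‖ ^ 2) :=
    mul_nonneg (by nlinarith [norm_nonneg a]) (by nlinarith [norm_nonneg z])
  exact (pow_le_pow_iff_left₀ (norm_nonneg _) hden.le two_ne_zero).mp (by linarith)

lemma norm_lt_one {a z : ℂ} (ha : ‖a‖ < 1) (hz : ‖z‖ < 1) : ‖mobius a z‖ < 1 := by
  have hden := norm_pos_iff.mpr (one_sub_conj_mul_ne_zero ha hz.le)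
  rw [mobius, norm_div, div_lt_one hden]
  have := norm_sq_one_sub_conj_mul_sub_norm_sq a z
  have : 0 < (1 - ‖a‖ ^ 2) * (1 - ‖z‖ ^ 2) :=
    mul_pos (by nlinarith [norm_nonneg a]) (by nlinarith [norm_nonneg z])
  exact lt_of_pow_lt_pow_left₀ 2 hden.le (by linarith)

@[simp]
lemma apply_zero (a : ℂ) : mobius a 0 = a := by simp [mobius]

@[simp]
lemma apply_self (a : ℂ) : mobius a a = 0 := by simp [mobius]

lemma hasDerivAt {a z : ℂ} (h : 1 - conj a * z ≠ 0) :
    HasDerivAt (mobius a) ((conj a * a - 1) / (1 - conj a * z) ^ 2) z := by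
  have hden : HasDerivAt (fun s => 1 - conj a * s) (-conj a) z := by
    simpa using ((hasDerivAt_id z).const_mul (conj a)).const_sub 1
  exact (((hasDerivAt_id z).const_sub a).div hden h).congr_deriv (by simp only [id]; ring)

lemma differentiableAt {a z : ℂ} (ha : ‖a‖ < 1) (hz : ‖z‖ ≤ 1) :
    DifferentiableAt ℂ (mobius a) z :=
  (hasDerivAt (one_sub_conj_mul_ne_zero ha hz)).differentiableAt

lemma hasDerivAt_zero (a : ℂ) : HasDerivAt (mobius a) ((‖a‖ ^ 2 - 1 : ℝ) : ℂ) 0 := by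
  convert hasDerivAt (a := a) (z := 0) (by simp) using 1
  push_cast
  simp [Complex.conj_mul']

lemma hasDerivAt_self {a : ℂ} (ha : ‖a‖ < 1) :
    HasDerivAt (mobius a) (-(1 - ‖a‖ ^ 2 : ℝ)⁻¹ : ℂ) a := by
  have hden := one_sub_conj_mul_ne_zero ha ha.le
  convert hasDerivAt hden using 1
  rw [Complex.conj_mul'] at hden ⊢
  rw [eq_div_iff (pow_ne_zero 2 hden)]
  push_cast
  field_simp
  ring

end mobius

namespace Complex

theorem norm_deriv_mul_le_of_mapsTo_ball_of_norm_lt {g : ℂ → ℂ} {w : ℂ}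
    (hg : DifferentiableOn ℂ g (ball 0 1)) (hmaps : MapsTo g (ball 0 1) (closedBall 0 1))
    (hw : ‖w‖ < 1) (hgw : ‖g w‖ < 1) :
    ‖deriv g w‖ * (1 - ‖w‖ ^ 2) ≤ 1 - ‖g w‖ ^ 2 := by
  set H := mobius (g w) ∘ g ∘ mobius w
  have hball : MapsTo (mobius w) (ball 0 1) (ball 0 1) := fun t ht => by
    simpa using mobius.norm_lt_one hw (by simpa using ht)
  have hmapsH : MapsTo H (ball 0 1) (closedBall (H 0) 1) := fun t ht => by
    simpa [H] using mobius.norm_le_one hgw (by simpa using hmaps (hball ht))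
  have hgdiff : ∀ s ∈ ball (0 : ℂ) 1, DifferentiableAt ℂ g s := fun s hs =>
    hg.differentiableAt (isOpen_ball.mem_nhds hs)
  have hdiffH : DifferentiableOn ℂ H (ball 0 1) := fun t ht =>
    have ht' : ‖t‖ ≤ 1 := (mem_ball_zero_iff.mp ht).le
    ((mobius.differentiableAt hgw (by simpa using hmaps (hball ht))).comp t
      ((hgdiff _ (hball ht)).comp t (mobius.differentiableAt hw ht'))).differentiableWithinAt
  have hderivH : HasDerivAt H
      ((-(1 - ‖g w‖ ^ 2 : ℝ)⁻¹ : ℂ) * (deriv g w * ((‖w‖ ^ 2 - 1 : ℝ) : ℂ))) 0 := by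
    have hg' := (hgdiff w (by simpa using hw)).hasDerivAt
    exact (mobius.hasDerivAt_self hgw).comp_of_eq 0
      (hg'.comp_of_eq 0 (mobius.hasDerivAt_zero w) (mobius.apply_zero w).symm)
      (by simp)
  have := norm_deriv_le_div_of_mapsTo_ball hdiffH hmapsH one_pos
  have hgw2 : 0 < 1 - ‖g w‖ ^ 2 := by nlinarith [norm_nonneg (g w)]
  have hw2 : ‖w‖ ^ 2 - 1 ≤ 0 := by nlinarith [norm_nonneg w]
  rw [hderivH.deriv, div_one, norm_mul, norm_neg, norm_mul, Complex.norm_real,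
    Complex.norm_real, Real.norm_of_nonneg (inv_nonneg.2 hgw2.le), Real.norm_of_nonpos hw2,
    inv_mul_le_iff₀ hgw2, mul_one, neg_sub] at this
  exact this

theorem norm_deriv_mul_le_of_mapsTo_ball {g : ℂ → ℂ} {w : ℂ}
    (hg : DifferentiableOn ℂ g (ball 0 1)) (hmaps : MapsTo g (ball 0 1) (closedBall 0 1))
    (hw : ‖w‖ < 1) :
    ‖deriv g w‖ * (1 - ‖w‖ ^ 2) ≤ 1 - ‖g w‖ ^ 2 := by
  have hw' : w ∈ ball (0 : ℂ) 1 := mem_ball_zero_iff.mpr hw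
  rcases (mem_closedBall_zero_iff.mp (hmaps hw')).lt_or_eq with hgw | hgw
  · exact norm_deriv_mul_le_of_mapsTo_ball_of_norm_lt hg hmaps hw hgw
  · have hnhds : ball (0 : ℂ) 1 ∈ 𝓝 w := isOpen_ball.mem_nhds hw'
    have hmax : IsLocalMax (norm ∘ g) w := mem_of_superset hnhds fun t ht => by
      simpa [hgw] using hmaps ht
    have hconst := eventually_eq_of_isLocalMax_norm
      (mem_of_superset hnhds fun s hs => hg.differentiableAt (isOpen_ball.mem_nhds hs)) hmax
    rw [Filter.EventuallyEq.deriv_eq (f := fun _ => g w) hconst, deriv_const, hgw]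
    simp

theorem norm_deriv_mul_sub_add_le {g : ℂ → ℂ} {w : ℂ} {ρ : ℝ} (hρ0 : 0 < ρ) (hρ1 : ρ ≤ 1)
    (hg : DifferentiableOn ℂ g (ball 0 1)) (hbound : ∀ t ∈ ball (0 : ℂ) 1, ‖g t‖ ≤ ρ)
    (hw : ‖w‖ < 1) :
    ‖deriv g w‖ * (ρ - ‖w‖ ^ 2) + ρ * (1 - ρ) ≤ ρ - ‖g w‖ ^ 2 := by
  have hnorm : ∀ t, ‖g t / ρ‖ = ‖g t‖ / ρ := fun t => by
    rw [norm_div, Complex.norm_real, Real.norm_of_nonneg hρ0.le]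
  have hpick := norm_deriv_mul_le_of_mapsTo_ball (g := fun t => g t / ρ) (hg.div_const _)
    (fun t ht => by
      rw [mem_closedBall_zero_iff, hnorm, div_le_one hρ0]; exact hbound t ht) hw
  rw [deriv_div_const, hnorm, norm_div, Complex.norm_real, Real.norm_of_nonneg hρ0.le] at hpick
  have hscaled : ‖deriv g w‖ * (1 - ‖w‖ ^ 2) * ρ ≤ ρ ^ 2 - ‖g w‖ ^ 2 := by
    have := mul_le_mul_of_nonneg_right hpick (sq_nonneg ρ)
    field_simp at this
    linarith
  have := mul_nonneg (mul_nonneg (norm_nonneg (deriv g w)) (sq_nonneg ‖w‖)) (sub_nonneg.2 hρ1)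
  nlinarith

end Complex

open Finset in
theorem le_div_mul_of_forall_le_mul_add {v d b : ℕ → ℝ} {κ C M : ℝ} (hκ : 0 < κ) (hC : 0 ≤ C)
    (hd : ∀ n, 0 ≤ d n) (hb : ∀ n, 0 ≤ b n) (hvM : ∀ n, v n ≤ M)
    (hrec : ∀ n, v n ≤ d n * v (n + 1) + C) (hdb : ∀ n, d n * b (n + 1) + κ ≤ b n) :
    v 0 ≤ b 0 / κ * C := by
  set P : ℕ → ℝ := fun n => ∏ j ∈ range n, d j
  have hP0 (n : ℕ) : 0 ≤ P n := prod_nonneg fun j _ => hd j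
  have hPsucc (n : ℕ) : P (n + 1) = P n * d n := prod_range_succ _ _
  have hunroll (n : ℕ) : v 0 ≤ C * ∑ k ∈ range n, P k + P n * v n := by
    induction n with
    | zero => simp [P]
    | succ n ih =>
      rw [sum_range_succ, hPsucc]
      nlinarith [mul_le_mul_of_nonneg_left (hrec n) (hP0 n)]
  have htelescope (n : ℕ) : κ * ∑ k ∈ range n, P k + P n * b n ≤ b 0 := by
    induction n with
    | zero => simp [P]
    | succ n ih =>
      rw [sum_range_succ, hPsucc]
      nlinarith [mul_le_mul_of_nonneg_left (hdb n) (hP0 n)]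
  have hsum (n : ℕ) : ∑ k ∈ range n, P k ≤ b 0 / κ := by
    rw [le_div_iff₀' hκ]
    linarith [htelescope n, mul_nonneg (hP0 n) (hb n)]
  have hPlim : Tendsto P atTop (𝓝 0) := (summable_of_sum_range_le hP0 hsum).tendsto_atTop_zero
  have hlim : Tendsto (fun n => b 0 / κ * C + P n * M) atTop (𝓝 (b 0 / κ * C)) := by
    simpa using (hPlim.mul_const M).const_add (b 0 / κ * C)
  refine ge_of_tendsto hlim (Eventually.of_forall fun n => ?_)
  nlinarith [hunroll n, mul_le_mul_of_nonneg_left (hsum n) hC,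
    mul_le_mul_of_nonneg_left (hvM n) (hP0 n)]

theorem Function.Surjective.exists_backward_orbit {X : Type*} {f : X → X}
    (hf : Function.Surjective f) (x : X) :
    ∃ y : ℕ → X, y 0 = x ∧ ∀ n, f (y (n + 1)) = y n :=
  ⟨fun n => (Function.surjInv hf)^[n] x, rfl, fun n => by
    show f ((Function.surjInv hf)^[n + 1] x) = _
    rw [Function.iterate_succ_apply']
    exact Function.surjInv_eq hf _⟩

theorem stmt10_general {X : Type*}
    (f : X → X) (hf : Function.Bijective f)
    (δ : ℝ) (hδ : 0 < δ)
    (F : X → ℂ → ℂ)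
    (hhol : ∀ x, DifferentiableOn ℂ (F x) (Metric.ball (0:ℂ) 1))
    (hbound : ∀ x, ∀ w ∈ Metric.ball (0:ℂ) 1, ‖F x w‖ ≤ Real.exp (-δ))
    (m : X → ℂ) (hm : ∀ x, ‖m x‖ < 1)
    (hminv : ∀ x, m (f x) = F x (m x))
    (u : X → ℂ) (hu : ∃ M : ℝ, ∀ x, ‖u x‖ ≤ M)
    (C : ℝ) (hC : ∀ y, ‖u (f y) - deriv (F y) (m y) * u y‖ ≤ C) :
    ∀ x, ‖u x‖ ≤ (1 - Real.exp (-δ))⁻¹ * C := by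
  intro x
  obtain ⟨M, hM⟩ := hu
  set r := Real.exp (-δ)
  have hr0 : 0 < r := Real.exp_pos _
  have hr1 : r < 1 := Real.exp_lt_one_iff.mpr (neg_lt_zero.mpr hδ)
  have hmr (z : X) : ‖m z‖ ≤ r := by
    obtain ⟨w, rfl⟩ := hf.surjective z
    rw [hminv]
    exact hbound w _ (mem_ball_zero_iff.mpr (hm w))
  have hC0 : 0 ≤ C := (norm_nonneg _).trans (hC x)
  obtain ⟨y, rfl, hy⟩ := hf.surjective.exists_backward_orbit x
  set d : ℕ → ℂ := fun n => deriv (F (y (n + 1))) (m (y (n + 1)))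
  have hrec (n : ℕ) : ‖u (y n)‖ ≤ ‖d n‖ * ‖u (y (n + 1))‖ + C := by
    have hCn := hC (y (n + 1))
    rw [hy] at hCn
    calc ‖u (y n)‖ ≤ ‖d n * u (y (n + 1))‖ + ‖u (y n) - d n * u (y (n + 1))‖ :=
          norm_le_insert' _ _
      _ ≤ ‖d n‖ * ‖u (y (n + 1))‖ + C := by rw [norm_mul]; gcongr
  have hdb (n : ℕ) :
      ‖d n‖ * (r - ‖m (y (n + 1))‖ ^ 2) + r * (1 - r) ≤ r - ‖m (y n)‖ ^ 2 := by
    rw [← hy n, hminv]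
    exact Complex.norm_deriv_mul_sub_add_le hr0 hr1.le (hhol _) (hbound _) (hm _)
  have hweight (n : ℕ) : 0 ≤ r - ‖m (y n)‖ ^ 2 := by
    nlinarith [hmr (y n), norm_nonneg (m (y n))]
  calc ‖u (y 0)‖ ≤ (r - ‖m (y 0)‖ ^ 2) / (r * (1 - r)) * C :=
        le_div_mul_of_forall_le_mul_add (v := fun n => ‖u (y n)‖) (mul_pos hr0 (sub_pos.2 hr1))
          hC0 (fun n => norm_nonneg (d n)) hweight (fun n => hM _) hrec hdb
    _ ≤ r / (r * (1 - r)) * C := by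
        gcongr
        exact sub_le_self _ (sq_nonneg _)
    _ = (1 - r)⁻¹ * C := by rw [div_mul_cancel_left₀ hr0.ne']

/-- hyperbolicity estimate for invariant sections.  Let `f : X → X` be a
bijection, and `F : X × 𝔻 → 𝔻` holomorphic in the disk variable with `|F(x,w)| ≤ e^{−δ}`.
If `m : X → 𝔻` satisfies `m(f(x)) = F(x, m(x))`, then every bounded `u : X → ℂ` satisfies
`sup_x |u(x)| ≤ (1 − e^{−δ})⁻¹ · sup_y |u(f(y)) − (∂_w F)(y, m(y))·u(y)|`. -/
theorem stmt10 {X : Type*} [Nonempty X]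
    (f : X → X) (hf : Function.Bijective f)
    (δ : ℝ) (hδ : 0 < δ)
    (F : X → ℂ → ℂ)
    (hhol : ∀ x, DifferentiableOn ℂ (F x) (Metric.ball (0:ℂ) 1))
    (hbound : ∀ x, ∀ w ∈ Metric.ball (0:ℂ) 1, ‖F x w‖ ≤ Real.exp (-δ))
    (m : X → ℂ) (hm : ∀ x, ‖m x‖ < 1)
    (hminv : ∀ x, m (f x) = F x (m x))
    (u : X → ℂ) (hu : ∃ M : ℝ, ∀ x, ‖u x‖ ≤ M)
    (C : ℝ) (hC : ∀ y, ‖u (f y) - deriv (F y) (m y) * u y‖ ≤ C) :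
    ∀ x, ‖u x‖ ≤ (1 - Real.exp (-δ))⁻¹ * C :=
  stmt10_general f hf δ hδ F hhol hbound m hm hminv u hu C hC
end

section
/- Let α ∈ (0,1)∖ℚ, let 1 ≤ r ≤ ∞, and let A ∈ C^r(ℝ/ℤ, SL(2,ℝ)). If for some n ≥ 1 and some x_* ∈ ℝ there is a C^r-renormalization representative (α_n, A^{(n)}) of (f_α, A) at level n around x_* which is C^r-conjugate to a cocycle of rotations — i.e. there exists C ∈ C^r(ℝ/ℤ, SL(2,ℝ)) with C(x+α_n)A^{(n)}(x)C(x)^{-1} ∈ SO(2,ℝ) for all x — then (f_α, A) is C^r-conjugate to a cocycle of rotations: there exists B ∈ C^r(ℝ/ℤ, SL(2,ℝ)) with B(x+α)A(x)B(x)^{-1} ∈ SO(2,ℝ) for all x. -/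
open MeasureTheory Filter Topology
open scoped ENNReal NNReal

noncomputable instance : NormedAddCommGroup (Matrix (Fin 2) (Fin 2) ℝ) := Matrix.normedAddCommGroup
noncomputable instance : NormedSpace ℝ (Matrix (Fin 2) (Fin 2) ℝ) := Matrix.normedSpace
instance : MeasurableSpace (Matrix (Fin 2) (Fin 2) ℝ) := borel _
instance : BorelSpace (Matrix (Fin 2) (Fin 2) ℝ) := ⟨rfl⟩

/-- Rotation matrix by angle `2πθ`. -/
noncomputable def Rot (θ : ℝ) : Matrix (Fin 2) (Fin 2) ℝ :=
  !![Real.cos (2 * Real.pi * θ), -Real.sin (2 * Real.pi * θ);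
     Real.sin (2 * Real.pi * θ),  Real.cos (2 * Real.pi * θ)]

/-- Membership in `SO(2,ℝ)`, i.e. being a rotation matrix. -/
def IsSO2 (M : Matrix (Fin 2) (Fin 2) ℝ) : Prop := ∃ θ : ℝ, M = Rot θ

/-- `1`-periodicity: a function on `ℝ` descends to `ℝ/ℤ`. -/
def Per1 {β : Type*} (A : ℝ → β) : Prop := ∀ x, A (x + 1) = A x

/-- Iterates `A_n(x) = A(x+(n−1)α)⋯A(x)` of a one-frequency cocycle. -/
noncomputable def iter1 (α : ℝ) (A : ℝ → Matrix (Fin 2) (Fin 2) ℝ) :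
    ℕ → ℝ → Matrix (Fin 2) (Fin 2) ℝ
  | 0 => fun _ => 1
  | n + 1 => fun x => A (x + (n : ℝ) * α) * iter1 α A n x

/-- Signed iterates: `A_k` for `k ≥ 0` and `A_{−k}(x) = A_k(x−kα)⁻¹`. -/
noncomputable def iter1Z (α : ℝ) (A : ℝ → Matrix (Fin 2) (Fin 2) ℝ) :
    ℤ → ℝ → Matrix (Fin 2) (Fin 2) ℝ
  | Int.ofNat n => iter1 α A n
  | Int.negSucc n => fun x => (iter1 α A (n + 1) (x - ((n : ℝ) + 1) * α))⁻¹

/-- Lyapunov exponent `L(f_α,A) = lim (1/n) ∫ log‖A_n‖`; by subadditivity (Fekete) the limit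
equals the infimum of the sequence, which we use as the definition. -/
noncomputable def lyap1 (α : ℝ) (A : ℝ → Matrix (Fin 2) (Fin 2) ℝ) : ℝ :=
  ⨅ n : ℕ, ((n : ℝ) + 1)⁻¹ * ∫ x in Set.Icc (0:ℝ) 1, Real.log ‖iter1 α A (n + 1) x‖

/-- `(f_α, A)` is `L²`-conjugate to (a cocycle of) rotations. -/
def L2Conj1 (α : ℝ) (A : ℝ → Matrix (Fin 2) (Fin 2) ℝ) : Prop :=
  ∃ B : ℝ → Matrix (Fin 2) (Fin 2) ℝ, Measurable B ∧ Per1 B ∧ (∀ x, (B x).det = 1) ∧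
    (∫⁻ x in Set.Icc (0:ℝ) 1, (‖B x‖₊ : ℝ≥0∞) ^ 2) < ⊤ ∧
    ∀ᵐ x ∂(volume : Measure ℝ), IsSO2 (B (x + α) * A x * (B x)⁻¹)

/-- Homotopy between two (continuous, `1`-periodic, `SL(2,ℝ)`-valued) maps on `ℝ/ℤ`. -/
def Homotopic1 (A A' : ℝ → Matrix (Fin 2) (Fin 2) ℝ) : Prop :=
  ∃ H : ℝ → ℝ → Matrix (Fin 2) (Fin 2) ℝ,
    Continuous (fun p : ℝ × ℝ => H p.1 p.2) ∧
    (∀ t, Per1 (H t)) ∧ (∀ t x, (H t x).det = 1) ∧ H 0 = A ∧ H 1 = A'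

/-- Iterated Gauss map: `α_n = G^n(α)` where `G(x) = {1/x}`. -/
noncomputable def gaussIter (α : ℝ) (n : ℕ) : ℝ := (fun x : ℝ => Int.fract x⁻¹)^[n] α

/-- `β_{n−1} = ∏_{k<n} G^k(α)` (so `betaP α 0 = β_{-1} = 1` and `betaP α (n+1) = β_n`). -/
noncomputable def betaP (α : ℝ) (n : ℕ) : ℝ := ∏ k ∈ Finset.range n, gaussIter α k

/-- The pair `(q_{n−1}, q_n)` of continued fraction denominators of `α ∈ (0,1)∖ℚ`, defined via
the recursion `q_{n+1} = a_{n+1} q_n + q_{n−1}` with partial quotients `a_{n+1} = ⌊1/G^n(α)⌋`. -/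
noncomputable def qpair (α : ℝ) : ℕ → ℤ × ℤ
  | 0 => (0, 1)
  | n + 1 => ((qpair α n).2, ⌊(gaussIter α n)⁻¹⌋ * (qpair α n).2 + (qpair α n).1)

/-- `A^{(n,0)}(x) = A_{(−1)^{n−1} q_{n−1}}(x_* + β_{n−1} x)`. -/
noncomputable def renA0 (α : ℝ) (A : ℝ → Matrix (Fin 2) (Fin 2) ℝ) (xs : ℝ) (n : ℕ) :
    ℝ → Matrix (Fin 2) (Fin 2) ℝ :=
  fun x => iter1Z α A ((-1) ^ (n + 1) * (qpair α n).1) (xs + betaP α n * x)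

/-- `A^{(n,1)}(x) = A_{(−1)^n q_n}(x_* + β_{n−1} x)`. -/
noncomputable def renA1 (α : ℝ) (A : ℝ → Matrix (Fin 2) (Fin 2) ℝ) (xs : ℝ) (n : ℕ) :
    ℝ → Matrix (Fin 2) (Fin 2) ℝ :=
  fun x => iter1Z α A ((-1) ^ n * (qpair α n).2) (xs + betaP α n * x)

open scoped Matrix

/-!
Write `F y = K ((y - x_*) / β_{n-1})` with `K = C · B^{(n)}`, and let `ℤ²` act on `ℝ` with
cocycle by `(k, m) : y ↦ y + kα + m`, `A_k`. The renormalization hypotheses say that `F`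
conjugates to rotations the two elements `(-1)^{n+1} (q_{n-1}, -p_{n-1})` and
`(-1)^n (q_n, -p_n)`, which translate by `β_{n-1}` and `β_n`; equivalently, these preserve
the field of quadratic forms `G = Fᵀ F`. The stabiliser of `G` is a subgroup, and
`q_{n-1} p_n - q_n p_{n-1} = ±1`, so it is all of `ℤ²`: `G` is `1`-periodic and
`Aᵀ G(· + α) A = G`. The positive square root of `G` is then a periodic conjugacy of `A` to
rotations, as smooth as `G`.
-/

lemma rot_transpose_mul_self (θ : ℝ) : (Rot θ)ᵀ * Rot θ = 1 := by
  ext i j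
  fin_cases i <;> fin_cases j <;>
    simp [Rot, Matrix.mul_apply, Fin.sum_univ_two, ← sq, mul_comm (Real.cos _)]

lemma det_rot (θ : ℝ) : (Rot θ).det = 1 := by
  simp [Rot, Matrix.det_fin_two_of, ← sq, Real.cos_sq_add_sin_sq]

lemma isSO2_iff {M : Matrix (Fin 2) (Fin 2) ℝ} : IsSO2 M ↔ Mᵀ * M = 1 ∧ M.det = 1 := by
  refine ⟨fun ⟨θ, hθ⟩ => hθ ▸ ⟨rot_transpose_mul_self θ, det_rot θ⟩, fun ⟨hM, hdet⟩ => ?_⟩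
  have h00 := congrFun (congrFun hM 0) 0
  have h01 := congrFun (congrFun hM 0) 1
  have h11 := congrFun (congrFun hM 1) 1
  simp only [Matrix.mul_apply, Fin.sum_univ_two, Matrix.transpose_apply, Matrix.one_apply]
    at h00 h01 h11
  rw [Matrix.det_fin_two] at hdet
  norm_num at h00 h01 h11
  -- `(M 0 1 + M 1 0)² + (M 1 1 - M 0 0)² = 2 - 2 det M = 0`
  have h01' : M 0 1 = -M 1 0 := by
    nlinarith [sq_nonneg (M 0 1 + M 1 0), sq_nonneg (M 1 1 - M 0 0)]
  have h11' : M 1 1 = M 0 0 := by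
    nlinarith [sq_nonneg (M 0 1 + M 1 0), sq_nonneg (M 1 1 - M 0 0)]
  set z : ℂ := ⟨M 0 0, M 1 0⟩
  have hz : ‖z‖ = 1 := by
    rw [Complex.norm_def, Complex.normSq_apply]
    exact (congrArg Real.sqrt h00).trans Real.sqrt_one
  have hz0 : z ≠ 0 := by rintro h; simp [h] at hz
  refine ⟨Complex.arg z / (2 * Real.pi), ?_⟩
  have harg : 2 * Real.pi * (Complex.arg z / (2 * Real.pi)) = Complex.arg z := by
    field_simp
  rw [Rot, harg, Complex.cos_arg hz0, Complex.sin_arg, hz]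
  ext i j
  fin_cases i <;> fin_cases j <;> simp [z, h01', h11']

lemma isSO2_one : IsSO2 1 := isSO2_iff.mpr ⟨by simp, by simp⟩

lemma isSO2_conj_of_mul_mul_inv_eq_one {P M Q : Matrix (Fin 2) (Fin 2) ℝ}
    (C : Matrix (Fin 2) (Fin 2) ℝ) (hC : IsUnit C.det) (h : P * M * Q⁻¹ = 1) :
    IsSO2 (C * P * M * (C * Q)⁻¹) := by
  rw [Matrix.mul_inv_rev, show C * P * M * (Q⁻¹ * C⁻¹) = C * (P * M * Q⁻¹) * C⁻¹ by
    simp only [Matrix.mul_assoc], h, Matrix.mul_one, Matrix.mul_nonsing_inv _ hC]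
  exact isSO2_one

lemma gram_eq_of_isSO2_conj {P M Q : Matrix (Fin 2) (Fin 2) ℝ} (hQ : IsUnit Q.det)
    (h : IsSO2 (P * M * Q⁻¹)) : Mᵀ * (Pᵀ * P) * M = Qᵀ * Q := by
  set O := P * M * Q⁻¹
  have hPM : P * M = O * Q := (Matrix.nonsing_inv_mul_cancel_right _ _ hQ).symm
  calc Mᵀ * (Pᵀ * P) * M = (P * M)ᵀ * (P * M) := by
        simp only [Matrix.transpose_mul, Matrix.mul_assoc]
    _ = Qᵀ * (Oᵀ * O) * Q := by rw [hPM]; simp only [Matrix.transpose_mul, Matrix.mul_assoc]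
    _ = Qᵀ * Q := by rw [(isSO2_iff.mp h).1, Matrix.mul_one]

lemma isSO2_conj_of_gram_eq {P M Q : Matrix (Fin 2) (Fin 2) ℝ} (hP : P.det = 1) (hM : M.det = 1)
    (hQ : Q.det = 1) (h : Mᵀ * (Pᵀ * P) * M = Qᵀ * Q) : IsSO2 (P * M * Q⁻¹) := by
  have hQu : IsUnit Q.det := hQ ▸ isUnit_one
  refine isSO2_iff.mpr ⟨?_, by simp [Matrix.det_mul, Matrix.det_nonsing_inv, hP, hM, hQ]⟩
  calc (P * M * Q⁻¹)ᵀ * (P * M * Q⁻¹) = (Q⁻¹)ᵀ * (Mᵀ * (Pᵀ * P) * M) * Q⁻¹ := by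
        simp only [Matrix.transpose_mul, Matrix.mul_assoc]
    _ = (Q * Q⁻¹)ᵀ * (Q * Q⁻¹) := by
        rw [h, Matrix.transpose_mul]; simp only [Matrix.mul_assoc]
    _ = 1 := by rw [Matrix.mul_nonsing_inv _ hQu, Matrix.transpose_one, Matrix.one_mul]

/-- The positive square root of a symmetric `S` with `det S = 1`: by Cayley–Hamilton,
`(S + 1)² = (trace S + 2) • S`. -/
noncomputable def sl2Sqrt (S : Matrix (Fin 2) (Fin 2) ℝ) : Matrix (Fin 2) (Fin 2) ℝ :=
  (√(S.trace + 2))⁻¹ • (S + 1)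

open Polynomial in
lemma add_one_mul_self_eq {S : Matrix (Fin 2) (Fin 2) ℝ} (hdet : S.det = 1) :
    (S + 1) * (S + 1) = (S.trace + 2) • S := by
  have h := Matrix.aeval_self_charpoly S
  rw [Matrix.charpoly_fin_two, hdet] at h
  simp only [map_add, map_sub, map_pow, map_mul, aeval_X, aeval_C, map_one,
    Algebra.algebraMap_eq_smul_one] at h
  rw [add_smul, ← sub_eq_zero, ← h]
  simp only [add_mul, mul_add, Matrix.one_mul, Matrix.mul_one, sq, smul_mul_assoc]
  module

section sl2Sqrt
variable {S : Matrix (Fin 2) (Fin 2) ℝ} (htr : 0 < S.trace + 2)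
include htr

lemma sl2Sqrt_transpose_mul_self (hS : Sᵀ = S) (hdet : S.det = 1) :
    (sl2Sqrt S)ᵀ * sl2Sqrt S = S := by
  have hsq : √(S.trace + 2) ^ 2 = S.trace + 2 := Real.sq_sqrt htr.le
  have hne : √(S.trace + 2) ≠ 0 := (Real.sqrt_pos.mpr htr).ne'
  rw [sl2Sqrt, Matrix.transpose_smul, Matrix.transpose_add, hS, Matrix.transpose_one,
    smul_mul_smul_comm, add_one_mul_self_eq hdet, smul_smul]
  convert one_smul ℝ S
  field_simp
  exact hsq.symm

lemma det_sl2Sqrt (hdet : S.det = 1) : (sl2Sqrt S).det = 1 := by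
  have hsq : √(S.trace + 2) ^ 2 = S 0 0 + S 1 1 + 2 := by
    rw [Real.sq_sqrt htr.le, Matrix.trace_fin_two]
  have hne : √(S.trace + 2) ≠ 0 := (Real.sqrt_pos.mpr htr).ne'
  rw [Matrix.det_fin_two] at hdet
  rw [sl2Sqrt, Matrix.det_smul, Fintype.card_fin, Matrix.det_fin_two]
  simp only [Matrix.add_apply, Matrix.one_apply_eq, Matrix.one_apply_ne zero_ne_one,
    Matrix.one_apply_ne one_ne_zero, add_zero]
  field_simp
  linear_combination hdet - hsq

end sl2Sqrt

section ContDiffMatrix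
variable {n : WithTop ℕ∞} {F G : ℝ → Matrix (Fin 2) (Fin 2) ℝ}

lemma contDiff_matrix_iff : ContDiff ℝ n F ↔ ∀ i j, ContDiff ℝ n fun x => F x i j :=
  ⟨fun h i j => contDiff_pi.mp (contDiff_pi.mp h i) j,
    fun h => contDiff_pi.mpr fun i => contDiff_pi.mpr fun j => h i j⟩

lemma ContDiff.matrix_mul (hF : ContDiff ℝ n F) (hG : ContDiff ℝ n G) :
    ContDiff ℝ n fun x => F x * G x := by
  rw [contDiff_matrix_iff] at *
  intro i j
  simpa only [Matrix.mul_apply] using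
    ContDiff.sum fun k _ => (hF i k).mul (hG k j)

lemma ContDiff.matrix_transpose (hF : ContDiff ℝ n F) : ContDiff ℝ n fun x => (F x)ᵀ := by
  rw [contDiff_matrix_iff] at *
  exact fun i j => hF j i

lemma ContDiff.sl2Sqrt (hF : ContDiff ℝ n F) (htr : ∀ x, 0 < (F x).trace + 2) :
    ContDiff ℝ n fun x => sl2Sqrt (F x) := by
  have htrace : ContDiff ℝ n fun x => (F x).trace + 2 := by
    simp only [Matrix.trace_fin_two]
    exact ((contDiff_matrix_iff.mp hF 0 0).add (contDiff_matrix_iff.mp hF 1 1)).add contDiff_const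
  exact ((htrace.sqrt fun x => (htr x).ne').inv fun x => (Real.sqrt_pos.mpr (htr x)).ne').smul
    (hF.add contDiff_const)

end ContDiffMatrix

lemma trace_transpose_mul_self_nonneg (M : Matrix (Fin 2) (Fin 2) ℝ) : 0 ≤ (Mᵀ * M).trace := by
  simp only [Matrix.trace_fin_two, Matrix.mul_apply, Fin.sum_univ_two, Matrix.transpose_apply,
    ← sq]
  positivity

theorem exists_isSO2_conj_of_invariant_gram {α : ℝ} {n : WithTop ℕ∞}
    {A F : ℝ → Matrix (Fin 2) (Fin 2) ℝ} (hdet : ∀ x, (A x).det = 1) (hF : ContDiff ℝ n F)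
    (hFdet : ∀ x, (F x).det = 1) (hper : Per1 fun x => (F x)ᵀ * F x)
    (hinv : ∀ x, (A x)ᵀ * ((F (x + α))ᵀ * F (x + α)) * A x = (F x)ᵀ * F x) :
    ∃ B : ℝ → Matrix (Fin 2) (Fin 2) ℝ,
      ContDiff ℝ n B ∧ Per1 B ∧ (∀ x, (B x).det = 1) ∧
      ∀ x, IsSO2 (B (x + α) * A x * (B x)⁻¹) := by
  have htr : ∀ x, 0 < ((F x)ᵀ * F x).trace + 2 := fun x => by
    linarith [trace_transpose_mul_self_nonneg (F x)]
  have hsymm : ∀ x, ((F x)ᵀ * F x)ᵀ = (F x)ᵀ * F x := fun x => by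
    rw [Matrix.transpose_mul, Matrix.transpose_transpose]
  have hgdet : ∀ x, ((F x)ᵀ * F x).det = 1 := fun x => by
    rw [Matrix.det_mul, Matrix.det_transpose, hFdet, mul_one]
  refine ⟨fun x => sl2Sqrt ((F x)ᵀ * F x), (hF.matrix_transpose.matrix_mul hF).sl2Sqrt htr,
    fun x => congrArg sl2Sqrt (hper x), fun x => det_sl2Sqrt (htr x) (hgdet x), fun x => ?_⟩
  refine isSO2_conj_of_gram_eq (det_sl2Sqrt (htr _) (hgdet _)) (hdet x)
    (det_sl2Sqrt (htr _) (hgdet _)) ?_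
  rw [sl2Sqrt_transpose_mul_self (htr _) (hsymm _) (hgdet _),
    sl2Sqrt_transpose_mul_self (htr _) (hsymm _) (hgdet _), hinv]

section Iterates
variable {α : ℝ} {A : ℝ → Matrix (Fin 2) (Fin 2) ℝ}

lemma iter1_succ (n : ℕ) (x : ℝ) : iter1 α A (n + 1) x = A (x + n * α) * iter1 α A n x := rfl

lemma iter1_succ' (n : ℕ) (x : ℝ) : iter1 α A (n + 1) x = iter1 α A n (x + α) * A x := by
  induction n with
  | zero => simp [iter1]
  | succ n ih =>
    rw [iter1_succ, ih, iter1_succ, ← Matrix.mul_assoc]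
    push_cast
    ring_nf

lemma iter1Z_neg_natCast (n : ℕ) (x : ℝ) :
    iter1Z α A (-n) x = (iter1 α A n (x - n * α))⁻¹ := by
  cases n with
  | zero => simp [iter1Z, iter1]
  | succ n =>
    change iter1Z α A (Int.negSucc n) x = _
    simp [iter1Z]

lemma iter1Z_add_one (hdet : ∀ x, (A x).det = 1) (k : ℤ) (x : ℝ) :
    iter1Z α A (k + 1) x = iter1Z α A k (x + α) * A x := by
  obtain ⟨n, rfl | rfl⟩ := Int.eq_nat_or_neg k
  · exact_mod_cast iter1_succ' n x
  cases n with
  | zero => simp [iter1Z, iter1]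
  | succ n =>
    have hx : x + α - ((n + 1 : ℕ) : ℝ) * α = x - n * α := by push_cast; ring
    rw [show -((n + 1 : ℕ) : ℤ) + 1 = -n by push_cast; ring, iter1Z_neg_natCast,
      iter1Z_neg_natCast, hx, iter1_succ, sub_add_cancel, Matrix.mul_inv_rev, Matrix.mul_assoc,
      Matrix.nonsing_inv_mul _ (by rw [hdet]; exact isUnit_one), Matrix.mul_one]

lemma iter1Z_sub_one (hdet : ∀ x, (A x).det = 1) (k : ℤ) (x : ℝ) :
    iter1Z α A (k - 1) x = iter1Z α A k (x - α) * (A (x - α))⁻¹ := by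
  rw [← sub_add_cancel k 1, iter1Z_add_one hdet, add_sub_cancel_right, sub_add_cancel,
    Matrix.mul_nonsing_inv_cancel_right _ _ (by rw [hdet]; exact isUnit_one)]

lemma iter1Z_add (hdet : ∀ x, (A x).det = 1) (k l : ℤ) (x : ℝ) :
    iter1Z α A (k + l) x = iter1Z α A k (x + l * α) * iter1Z α A l x := by
  induction l using Int.induction_on generalizing x with
  | zero => simp [iter1Z, iter1]
  | succ l ih =>
    rw [← add_assoc, iter1Z_add_one hdet, ih, iter1Z_add_one hdet, Matrix.mul_assoc]
    push_cast
    ring_nf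
  | pred l ih =>
    rw [← add_sub_assoc, iter1Z_sub_one hdet, ih, iter1Z_sub_one hdet (-l), Matrix.mul_assoc]
    push_cast
    ring_nf

lemma iter1_periodic (hper : Per1 A) (n : ℕ) : Function.Periodic (iter1 α A n) 1 := by
  induction n with
  | zero => exact fun _ => rfl
  | succ n ih => exact (Function.Periodic.add_const hper _).mul ih

lemma iter1Z_periodic (hper : Per1 A) : ∀ k : ℤ, Function.Periodic (iter1Z α A k) 1
  | Int.ofNat n => iter1_periodic hper n
  | Int.negSucc n => ((iter1_periodic hper (n + 1)).sub_const _).comp Inv.inv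

lemma iter1Z_one (x : ℝ) : iter1Z α A 1 x = A x := by
  simp [iter1Z, iter1]

lemma iter1Z_add_intCast (hper : Per1 A) (k m : ℤ) (x : ℝ) :
    iter1Z α A k (x + m) = iter1Z α A k x := by
  simpa using (iter1Z_periodic hper k).int_mul m x

end Iterates

def invariantShifts (α : ℝ) (A G : ℝ → Matrix (Fin 2) (Fin 2) ℝ) (hper : Per1 A)
    (hdet : ∀ x, (A x).det = 1) : AddSubgroup (ℤ × ℤ) where
  carrier := {e | ∀ y, (iter1Z α A e.1 y)ᵀ * G (y + e.1 * α + e.2) * iter1Z α A e.1 y = G y}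
  zero_mem' y := by simp [iter1Z, iter1]
  add_mem' {e f} he hf y := by
    have harg : y + ((e + f).1 : ℤ) * α + (e + f).2 = y + e.1 * α + e.2 + f.1 * α + f.2 := by
      simp only [Prod.fst_add, Prod.snd_add]; push_cast; ring
    rw [harg, Prod.fst_add, add_comm e.1, iter1Z_add hdet, ← iter1Z_add_intCast hper f.1 e.2,
      Matrix.transpose_mul, ← he y, ← hf (y + e.1 * α + e.2)]
    simp only [Matrix.mul_assoc]
  neg_mem' {e} he y := by
    set z := y + ((-e).1 : ℤ) * α + (-e).2
    have hzy : z + e.1 * α + e.2 = y := by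
      simp only [z, Prod.fst_neg, Prod.snd_neg]; push_cast; ring
    have hinv : iter1Z α A e.1 z * iter1Z α A (-e).1 y = 1 := by
      refine mul_eq_one_comm.mp ?_
      rw [← hzy, iter1Z_add_intCast hper, Prod.fst_neg, ← iter1Z_add hdet, neg_add_cancel]
      rfl
    have hz := he z
    rw [hzy] at hz
    rw [← hz]
    calc (iter1Z α A (-e).1 y)ᵀ * ((iter1Z α A e.1 z)ᵀ * G y * iter1Z α A e.1 z) *
          iter1Z α A (-e).1 y
        = (iter1Z α A e.1 z * iter1Z α A (-e).1 y)ᵀ * G y *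
          (iter1Z α A e.1 z * iter1Z α A (-e).1 y) := by
          simp only [Matrix.transpose_mul, Matrix.mul_assoc]
      _ = G y := by rw [hinv, Matrix.transpose_one, Matrix.one_mul, Matrix.mul_one]

namespace invariantShifts
variable {α : ℝ} {A G : ℝ → Matrix (Fin 2) (Fin 2) ℝ} {hper : Per1 A} {hdet : ∀ x, (A x).det = 1}

lemma periodic_of_zero_one_mem (h : ((0, 1) : ℤ × ℤ) ∈ invariantShifts α A G hper hdet) :
    Per1 G := fun y => by
  simpa [iter1Z, iter1] using h y

lemma invariant_of_one_zero_mem (h : ((1, 0) : ℤ × ℤ) ∈ invariantShifts α A G hper hdet) (y : ℝ) :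
    (A y)ᵀ * G (y + α) * A y = G y := by
  simpa [iter1Z_one] using h y

end invariantShifts

lemma AddSubgroup.eq_top_of_isUnit_det {H : AddSubgroup (ℤ × ℤ)} {u v : ℤ × ℤ} (hu : u ∈ H)
    (hv : v ∈ H) (h : IsUnit (u.1 * v.2 - u.2 * v.1)) : H = ⊤ := by
  have hd := Int.isUnit_mul_self h
  refine eq_top_iff.mpr fun e _ => ?_
  have he : e = ((u.1 * v.2 - u.2 * v.1) * (e.1 * v.2 - e.2 * v.1)) • u +
      ((u.1 * v.2 - u.2 * v.1) * (e.2 * u.1 - e.1 * u.2)) • v := by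
    ext
    · simp only [Prod.fst_add, Prod.smul_fst, smul_eq_mul]; linear_combination (-e.1) * hd
    · simp only [Prod.snd_add, Prod.smul_snd, smul_eq_mul]; linear_combination (-e.2) * hd
  rw [he]
  exact H.add_mem (H.zsmul_mem hu _) (H.zsmul_mem hv _)

section ContinuedFraction
variable {α : ℝ}

lemma gaussIter_succ (n : ℕ) : gaussIter α (n + 1) = Int.fract (gaussIter α n)⁻¹ :=
  Function.iterate_succ_apply' _ n α

lemma Irrational.gaussIter (hirr : Irrational α) (n : ℕ) : Irrational (gaussIter α n) := by
  induction n with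
  | zero => exact hirr
  | succ n ih => rw [gaussIter_succ, Int.fract]; exact ih.inv.sub_intCast _

lemma betaP_succ (n : ℕ) : betaP α (n + 1) = betaP α n * gaussIter α n :=
  Finset.prod_range_succ _ _

lemma betaP_ne_zero (hirr : Irrational α) (n : ℕ) : betaP α n ≠ 0 :=
  Finset.prod_ne_zero_iff.mpr fun k _ => (hirr.gaussIter k).ne_zero

/-- The pair `(p_{n−1}, p_n)` of continued fraction numerators. -/
noncomputable def ppair (α : ℝ) : ℕ → ℤ × ℤ
  | 0 => (1, 0)
  | n + 1 => ((ppair α n).2, ⌊(gaussIter α n)⁻¹⌋ * (ppair α n).2 + (ppair α n).1)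

lemma qpair_mul_sub_ppair (hirr : Irrational α) (n : ℕ) :
    ((qpair α n).1 : ℝ) * α - (ppair α n).1 = (-1) ^ (n + 1) * betaP α n ∧
    ((qpair α n).2 : ℝ) * α - (ppair α n).2 = (-1) ^ n * betaP α (n + 1) := by
  induction n with
  | zero => simp [qpair, ppair, betaP, gaussIter]
  | succ n ih =>
    have hg : gaussIter α n * (gaussIter α n)⁻¹ = 1 :=
      mul_inv_cancel₀ (hirr.gaussIter n).ne_zero
    simp only [qpair, ppair]
    push_cast
    refine ⟨by rw [ih.2]; ring, ?_⟩
    rw [betaP_succ (n + 1), betaP_succ n, gaussIter_succ, Int.fract]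
    linear_combination (⌊(gaussIter α n)⁻¹⌋ : ℝ) * ih.2 + ih.1 +
      (-1) ^ n * betaP α n * hg + (⌊(gaussIter α n)⁻¹⌋ : ℝ) * (-1) ^ n * betaP_succ n

lemma qpair_ppair_det (n : ℕ) :
    (qpair α n).1 * (ppair α n).2 - (qpair α n).2 * (ppair α n).1 = (-1) ^ (n + 1) := by
  induction n with
  | zero => rfl
  | succ n ih =>
    simp only [qpair, ppair]
    linear_combination -ih

end ContinuedFraction

lemma neg_one_pow_mul_self {R : Type*} [Ring R] (n : ℕ) : (-1 : R) ^ n * (-1) ^ n = 1 := by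
  rw [← pow_add, ← two_mul, pow_mul, neg_one_sq, one_pow]

section RenormalizationShifts
variable {α : ℝ}

/-- The elements of `ℤ²` whose cocycles `A_k` are `A^{(n,0)}` and `A^{(n,1)}` before rescaling:
`renA0 α A xs n x = iter1Z α A (renShift0 α n).1 (xs + β_{n-1} x)` by definition, and
likewise for `renA1` and `renShift1`. -/
noncomputable def renShift0 (α : ℝ) (n : ℕ) : ℤ × ℤ :=
  ((-1) ^ (n + 1) * (qpair α n).1, (-1) ^ n * (ppair α n).1)

noncomputable def renShift1 (α : ℝ) (n : ℕ) : ℤ × ℤ :=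
  ((-1) ^ n * (qpair α n).2, (-1) ^ (n + 1) * (ppair α n).2)

lemma renShift0_translation (hirr : Irrational α) (n : ℕ) :
    ((renShift0 α n).1 : ℝ) * α + (renShift0 α n).2 = betaP α n := by
  simp only [renShift0]
  push_cast
  linear_combination (-1 : ℝ) ^ (n + 1) * (qpair_mul_sub_ppair hirr n).1 +
    betaP α n * neg_one_pow_mul_self (R := ℝ) (n + 1)

lemma renShift1_translation (hirr : Irrational α) (n : ℕ) :
    ((renShift1 α n).1 : ℝ) * α + (renShift1 α n).2 = betaP α n * gaussIter α n := by
  simp only [renShift1]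
  push_cast
  linear_combination (-1 : ℝ) ^ n * (qpair_mul_sub_ppair hirr n).2 +
    betaP α (n + 1) * neg_one_pow_mul_self (R := ℝ) n + betaP_succ n

lemma renShift_det (n : ℕ) :
    (renShift0 α n).1 * (renShift1 α n).2 - (renShift0 α n).2 * (renShift1 α n).1 =
      (-1) ^ (n + 1) := by
  simp only [renShift0, renShift1]
  linear_combination (-1 : ℤ) ^ n * (-1) ^ n * qpair_ppair_det n +
    (-1) ^ (n + 1) * neg_one_pow_mul_self (R := ℤ) n

end RenormalizationShifts

lemma mem_invariantShifts_of_isSO2 {α : ℝ} {A K : ℝ → Matrix (Fin 2) (Fin 2) ℝ} (hper : Per1 A)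
    (hdet : ∀ x, (A x).det = 1) (hK : ∀ t, (K t).det = 1) {xs β τ : ℝ} (hβ : β ≠ 0)
    {e : ℤ × ℤ} (he : e.1 * α + e.2 = β * τ)
    (hconj : ∀ t, IsSO2 (K (t + τ) * iter1Z α A e.1 (xs + β * t) * (K t)⁻¹)) :
    e ∈ invariantShifts α A (fun y => (K ((y - xs) / β))ᵀ * K ((y - xs) / β)) hper hdet := by
  intro y
  have hy : xs + β * ((y - xs) / β) = y := by field_simp; ring
  have hshift : (y + e.1 * α + e.2 - xs) / β = (y - xs) / β + τ := by
    rw [add_assoc, he]; field_simp; ring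
  have h := gram_eq_of_isSO2_conj (hK _ ▸ isUnit_one) (hconj ((y - xs) / β))
  rw [hy] at h
  simpa only [hshift] using h

theorem stmt15_general (α : ℝ) (hirr : Irrational α)
    (r : ℕ∞)
    (A : ℝ → Matrix (Fin 2) (Fin 2) ℝ)
    (hper : Per1 A) (hdet : ∀ x, (A x).det = 1)
    -- some `C^r`-renormalization representative at some level `n ≥ 1` around some `x_*`
    -- is `C^r`-conjugate to rotations
    (hren : ∃ n : ℕ, 1 ≤ n ∧ ∃ xs : ℝ, ∃ Bn : ℝ → Matrix (Fin 2) (Fin 2) ℝ,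
      ContDiff ℝ r Bn ∧ (∀ x, (Bn x).det = 1) ∧
      (∀ x, Bn (x + 1) * renA0 α A xs n x * (Bn x)⁻¹ = 1) ∧
      ∃ C : ℝ → Matrix (Fin 2) (Fin 2) ℝ,
        ContDiff ℝ r C ∧ Per1 C ∧ (∀ x, (C x).det = 1) ∧
        ∀ x, IsSO2 (C (x + gaussIter α n) *
          (Bn (x + gaussIter α n) * renA1 α A xs n x * (Bn x)⁻¹) * (C x)⁻¹)) :
    ∃ B : ℝ → Matrix (Fin 2) (Fin 2) ℝ,
      ContDiff ℝ r B ∧ Per1 B ∧ (∀ x, (B x).det = 1) ∧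
      ∀ x, IsSO2 (B (x + α) * A x * (B x)⁻¹) := by
  obtain ⟨n, -, xs, Bn, hBn, hBndet, hBn0, C, hC, hCper, hCdet, hCrot⟩ := hren
  set K : ℝ → Matrix (Fin 2) (Fin 2) ℝ := fun t => C t * Bn t
  have hKdet (t : ℝ) : (K t).det = 1 := by simp [K, Matrix.det_mul, hCdet, hBndet]
  have hβ := betaP_ne_zero hirr n
  set H := invariantShifts α A (fun y => (K ((y - xs) / betaP α n))ᵀ * K ((y - xs) / betaP α n))
    hper hdet
  have h0 : renShift0 α n ∈ H :=
    mem_invariantShifts_of_isSO2 hper hdet hKdet hβ (by rw [renShift0_translation hirr, mul_one])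
      fun t => by
        simp only [K, hCper t]
        exact isSO2_conj_of_mul_mul_inv_eq_one (C t) (by simp [hCdet]) (hBn0 t)
  have h1 : renShift1 α n ∈ H :=
    mem_invariantShifts_of_isSO2 hper hdet hKdet hβ (renShift1_translation hirr n) fun t => by
      change IsSO2 (K _ * renA1 α A xs n t * _)
      simpa only [K, Matrix.mul_inv_rev, Matrix.mul_assoc] using hCrot t
  have htop := AddSubgroup.eq_top_of_isUnit_det h0 h1
    (by rw [renShift_det]; exact isUnit_neg_one.pow _)
  have hshift (e : ℤ × ℤ) : e ∈ H := htop ▸ AddSubgroup.mem_top e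
  exact exists_isSO2_conj_of_invariant_gram (F := fun y => K ((y - xs) / betaP α n)) hdet
    ((hC.matrix_mul hBn).comp ((contDiff_id.sub contDiff_const).div_const _)) (fun y => hKdet _)
    (invariantShifts.periodic_of_zero_one_mem (hshift _))
    (invariantShifts.invariant_of_one_zero_mem (hshift _))

/-- If a `C^r`-renormalization representative of `(f_α, A)` is
`C^r`-conjugate to a cocycle of rotations, then `(f_α, A)` is `C^r`-conjugate to a cocycle of
rotations. -/
theorem stmt15 (α : ℝ) (hα0 : α ∈ Set.Ioo (0:ℝ) 1) (hirr : Irrational α)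
    (r : ℕ∞) (hr : 1 ≤ r)
    (A : ℝ → Matrix (Fin 2) (Fin 2) ℝ)
    (hA : ContDiff ℝ r A) (hper : Per1 A) (hdet : ∀ x, (A x).det = 1)
    -- some `C^r`-renormalization representative at some level `n ≥ 1` around some `x_*`
    -- is `C^r`-conjugate to rotations
    (hren : ∃ n : ℕ, 1 ≤ n ∧ ∃ xs : ℝ, ∃ Bn : ℝ → Matrix (Fin 2) (Fin 2) ℝ,
      ContDiff ℝ r Bn ∧ (∀ x, (Bn x).det = 1) ∧
      (∀ x, Bn (x + 1) * renA0 α A xs n x * (Bn x)⁻¹ = 1) ∧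
      ∃ C : ℝ → Matrix (Fin 2) (Fin 2) ℝ,
        ContDiff ℝ r C ∧ Per1 C ∧ (∀ x, (C x).det = 1) ∧
        ∀ x, IsSO2 (C (x + gaussIter α n) *
          (Bn (x + gaussIter α n) * renA1 α A xs n x * (Bn x)⁻¹) * (C x)⁻¹)) :
    ∃ B : ℝ → Matrix (Fin 2) (Fin 2) ℝ,
      ContDiff ℝ r B ∧ Per1 B ∧ (∀ x, (B x).det = 1) ∧
      ∀ x, IsSO2 (B (x + α) * A x * (B x)⁻¹) :=
  stmt15_general α hirr r A hper hdet hren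
end

section
/- Let 𝔻 be the open unit disk in ℂ, let Φ(μ) = ∫_𝔻 (1−|z|²)^{-1} dμ(z) for a Borel probability measure μ on 𝔻, and let M_∞ = {μ : Φ(μ) < ∞} with the weak-* topology. There exists a Borel measurable map 𝔅 : M_∞ → 𝔻 such that: (i) for every holomorphic automorphism g of 𝔻 (Möbius transformation preserving 𝔻) and every μ ∈ M_∞, one has 𝔅(g_*μ) = g(𝔅(μ)); and (ii) (1−|𝔅(μ)|²)^{-1} ≤ Φ(μ) for every μ ∈ M_∞. -/
/-!
The map `z ↦ ((1 + |z|²) / (1 - |z|²), 2z / (1 - |z|²))` identifies `𝔻` with the upper sheet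
`t² - |X|² = 1, t > 0` of the hyperboloid in Minkowski space `ℝ × ℂ`; its time coordinate is
`2 (1 - |z|²)⁻¹ - 1`, so `Φ(μ) < ∞` says exactly that `μ` has a mean `p` in Minkowski space, and
the automorphisms of `𝔻` act on `ℝ × ℂ` by linear (Lorentz) maps.  The interior of the upper sheet
is convex, so `p` satisfies `t² - |X|² ≥ 1`; rescaling `p` back onto the hyperboloid and pulling it
back to `𝔻` defines `𝔅(μ)`.  Linearity of the integral gives equivariance, and the rescaling factor
`√(t² - |X|²) ≥ 1` gives `(1 - |𝔅(μ)|²)⁻¹ ≤ (t + 1) / 2 = Φ(μ)`.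

Borel measurability holds because `μ ↦ ∫ f dμ` is Borel for every continuous `f`: truncations of
`f` are bounded, so their integrals are weak-* continuous, and they converge by monotone or
dominated convergence.
-/

open MeasureTheory Filter Topology
open scoped ENNReal

/-- The open unit disk in `ℂ`. -/
abbrev UnitDisk : Set ℂ := Metric.ball (0:ℂ) 1

/-- `Φ(μ) = ∫ (1−|z|²)⁻¹ dμ(z)` for a probability measure on the unit disk. -/
noncomputable def PhiDisk (μ : ProbabilityMeasure UnitDisk) : ℝ≥0∞ :=
  ∫⁻ z, ENNReal.ofReal ((1 - ‖(z : ℂ)‖ ^ 2)⁻¹) ∂(μ : Measure UnitDisk)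

/-- The Möbius maps `z ↦ λ(z−a)/(1−āz)`; for `|λ| = 1` and `|a| < 1` these are exactly the
holomorphic automorphisms of the unit disk. -/
noncomputable def moebAuto (lam a z : ℂ) : ℂ :=
  lam * (z - a) / (1 - (starRingEnd ℂ) a * z)

open BoundedContinuousFunction

section Truncation

variable {X 𝕜 : Type*} [TopologicalSpace X] [RCLike 𝕜] {f : X → 𝕜}

noncomputable def radialTruncation (hf : Continuous f) (n : ℕ) : X →ᵇ 𝕜 :=
  ofNormedAddCommGroup (fun x => ((n + 1 : ℝ) / max ((n : ℝ) + 1) ‖f x‖) • f x)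
    ((continuous_const.div (continuous_const.max hf.norm) fun x =>
      (lt_max_of_lt_left (by positivity)).ne').smul hf) (n + 1) fun x => by
    rw [norm_smul, Real.norm_of_nonneg (by positivity), div_mul_eq_mul_div,
      div_le_iff₀ (lt_max_of_lt_left (by positivity))]
    gcongr
    exact le_max_right _ _

lemma radialTruncation_apply (hf : Continuous f) (n : ℕ) (x : X) :
    radialTruncation hf n x = ((n + 1 : ℝ) / max ((n : ℝ) + 1) ‖f x‖) • f x :=
  rfl

lemma norm_radialTruncation (hf : Continuous f) (n : ℕ) (x : X) :
    ‖radialTruncation hf n x‖ = min ‖f x‖ (n + 1) := by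
  have hn : (0 : ℝ) < n + 1 := by positivity
  rw [radialTruncation_apply, norm_smul, Real.norm_of_nonneg (by positivity)]
  rcases le_total ‖f x‖ (n + 1) with h | h
  · rw [max_eq_left h, min_eq_left h, div_self hn.ne', one_mul]
  · rw [max_eq_right h, min_eq_right h, div_mul_cancel₀ _ (hn.trans_le h).ne']

lemma tendsto_radialTruncation (hf : Continuous f) (x : X) :
    Tendsto (fun n => radialTruncation hf n x) atTop (𝓝 (f x)) := by
  refine tendsto_atTop_of_eventually_const (i₀ := ⌈‖f x‖⌉₊) fun n hn => ?_
  have h : ‖f x‖ ≤ n + 1 := (Nat.ceil_le.1 hn).trans (by simp)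
  simp [radialTruncation_apply, max_eq_left h, div_self (by positivity : (n + 1 : ℝ) ≠ 0)]

end Truncation

namespace MeasureTheory.ProbabilityMeasure

variable {X 𝕜 : Type*} [TopologicalSpace X] [MeasurableSpace X] [OpensMeasurableSpace X]
  [RCLike 𝕜] {f : X → 𝕜}

lemma continuous_integral_boundedContinuousFunction_rclike (g : X →ᵇ 𝕜) :
    Continuous fun μ : ProbabilityMeasure X => ∫ x, g x ∂μ :=
  continuous_iff_continuousAt.2 fun _ =>
    (tendsto_iff_forall_integral_rclike_tendsto 𝕜).1 tendsto_id g

lemma measurable_lintegral_enorm (hf : Continuous f) :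
    Measurable[borel (ProbabilityMeasure X)] fun μ : ProbabilityMeasure X => ∫⁻ x, ‖f x‖ₑ ∂μ := by
  let _ : MeasurableSpace (ProbabilityMeasure X) := borel _
  have _ : BorelSpace (ProbabilityMeasure X) := ⟨rfl⟩
  refine measurable_of_tendsto_metrizable (fun n => ?_) (tendsto_pi_nhds.2 fun μ =>
    lintegral_tendsto_of_tendsto_of_monotone (f := fun n x => ‖radialTruncation hf n x‖ₑ)
      (fun n => (radialTruncation hf n).continuous.enorm.aemeasurable)
      (ae_of_all _ fun x n m hnm => ?_)
      (ae_of_all _ fun x => (tendsto_radialTruncation hf x).enorm))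
  · convert (continuous_lintegral_boundedContinuousFunction
      (radialTruncation hf n).normComp.nnnorm).measurable using 3
    ext x
    simp [enorm_eq_nnnorm]
  · simp only [← ofReal_norm, norm_radialTruncation]
    gcongr

lemma measurable_integral (hf : Continuous f) :
    Measurable[borel (ProbabilityMeasure X)] fun μ : ProbabilityMeasure X => ∫ x, f x ∂μ := by
  let _ : MeasurableSpace (ProbabilityMeasure X) := borel _
  have _ : BorelSpace (ProbabilityMeasure X) := ⟨rfl⟩
  let S := {μ : ProbabilityMeasure X | Integrable f μ}
  have hS : MeasurableSet S := by
    have : S = {μ : ProbabilityMeasure X | ∫⁻ x, ‖f x‖ₑ ∂μ < ∞} :=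
      Set.ext fun μ => ⟨fun h => h.2, fun h => ⟨hf.aestronglyMeasurable, h⟩⟩
    rw [this]
    exact measurable_lintegral_enorm hf measurableSet_Iio
  -- off `S` the integral is `0` by convention, whence the indicator
  refine measurable_of_tendsto_metrizable
    (f := fun n => S.indicator fun μ => ∫ x, radialTruncation hf n x ∂μ)
    (fun n => (continuous_integral_boundedContinuousFunction_rclike _).measurable.indicator hS)
    (tendsto_pi_nhds.2 fun μ => ?_)
  by_cases hμ : μ ∈ S
  · simp only [Set.indicator_of_mem hμ]
    refine tendsto_integral_of_dominated_convergence (‖f ·‖)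
      (fun n => (radialTruncation hf n).continuous.aestronglyMeasurable) hμ.norm
      (fun n => ae_of_all _ fun x => ?_) (ae_of_all _ (tendsto_radialTruncation hf))
    rw [norm_radialTruncation]
    exact min_le_left _ _
  · simp only [Set.indicator_of_notMem hμ, integral_undef hμ, tendsto_const_nhds]

end MeasureTheory.ProbabilityMeasure

lemma Complex.norm_one_add_mul_I (y : ℝ) : ‖1 + y * I‖ = √(1 + y ^ 2) := by
  simpa using norm_add_mul_I 1 y

lemma sqrt_one_add_sq_norm_integral_le {α E : Type*} [MeasurableSpace α] {μ : Measure α}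
    [IsProbabilityMeasure μ] [NormedAddCommGroup E] [NormedSpace ℝ E] {X : α → E} {T : α → ℝ}
    (hX : Integrable X μ) (hT : Integrable T μ) (h : ∀ x, √(1 + ‖X x‖ ^ 2) ≤ T x) :
    √(1 + ‖∫ x, X x ∂μ‖ ^ 2) ≤ ∫ x, T x ∂μ := by
  -- `‖1 + y i‖ = √(1 + y²)` turns the convexity of `√(1 + ·²)` into the triangle inequality in `ℂ`
  have hF : Integrable (fun x => 1 + (‖X x‖ : ℂ) * Complex.I) μ :=
    (integrable_const 1).add (hX.norm.ofReal.mul_const _)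
  calc √(1 + ‖∫ x, X x ∂μ‖ ^ 2) ≤ √(1 + (∫ x, ‖X x‖ ∂μ) ^ 2) := by
        gcongr
        exact norm_integral_le_integral_norm _
    _ = ‖∫ x, 1 + (‖X x‖ : ℂ) * Complex.I ∂μ‖ := by
        rw [integral_add (integrable_const 1) (hX.norm.ofReal.mul_const _), integral_const,
          integral_mul_const, integral_complex_ofReal, probReal_univ, one_smul,
          Complex.norm_one_add_mul_I]
    _ ≤ ∫ x, ‖1 + (‖X x‖ : ℂ) * Complex.I‖ ∂μ := norm_integral_le_integral_norm _
    _ ≤ ∫ x, T x ∂μ :=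
        integral_mono hF.norm hT fun x => (Complex.norm_one_add_mul_I _).trans_le (h x)

open ComplexConjugate

namespace ConformalBarycenter

noncomputable def phi (z : ℂ) : ℝ := (1 - ‖z‖ ^ 2)⁻¹

noncomputable def toHyperboloid (z : ℂ) : ℝ × ℂ := (2 * phi z - 1, (2 * phi z : ℝ) * z)

-- Normalise a future timelike `p = (t, X)` onto the hyperboloid and project it stereographically
-- from `(-1, 0)`: `X / (t + 1)` on the hyperboloid, hence `X / (t + √(t² - |X|²))` in general.
noncomputable def ofHyperboloid (p : ℝ × ℂ) : ℂ := p.2 / (p.1 + √(p.1 ^ 2 - ‖p.2‖ ^ 2) : ℝ)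

noncomputable def moebiusLorentz (lam a : ℂ) : ℝ × ℂ →L[ℝ] ℝ × ℂ :=
  LinearMap.toContinuousLinearMap
    { toFun := fun p => (phi a * ((1 + ‖a‖ ^ 2) * p.1 - 2 * (conj a * p.2).re),
        phi a * (lam * (p.2 - 2 * p.1 * a + a ^ 2 * conj p.2)))
      map_add' := fun p q => by
        ext <;> simp only [Prod.fst_add, Prod.snd_add, Prod.mk_add_mk, mul_add, Complex.add_re,
          Complex.ofReal_add, map_add] <;> ring
      map_smul' := fun c p => by
        ext <;> simp only [Prod.smul_fst, Prod.smul_snd, Prod.smul_mk, smul_eq_mul,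
          Complex.real_smul, RingHom.id_apply, mul_left_comm _ (c : ℂ), Complex.re_ofReal_mul,
          map_mul, Complex.conj_ofReal, Complex.ofReal_mul] <;> ring }

lemma one_sub_sq_norm_pos {z : ℂ} (hz : ‖z‖ < 1) : 0 < 1 - ‖z‖ ^ 2 := by
  nlinarith [norm_nonneg z]

lemma one_sub_sq_norm_mul_phi {z : ℂ} (hz : ‖z‖ < 1) : (1 - ‖z‖ ^ 2) * phi z = 1 :=
  mul_inv_cancel₀ (one_sub_sq_norm_pos hz).ne'

lemma one_le_phi {z : ℂ} (hz : ‖z‖ < 1) : 1 ≤ phi z :=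
  one_le_inv₀ (one_sub_sq_norm_pos hz) |>.2 (by nlinarith [norm_nonneg z])

lemma sq_norm_mul_phi {z : ℂ} (hz : ‖z‖ < 1) : ‖z‖ ^ 2 * phi z = phi z - 1 := by
  linear_combination -one_sub_sq_norm_mul_phi hz

lemma one_le_toHyperboloid_fst {z : ℂ} (hz : ‖z‖ < 1) : 1 ≤ (toHyperboloid z).1 := by
  simp only [toHyperboloid]
  linarith [one_le_phi hz]

lemma sq_norm_toHyperboloid_snd {z : ℂ} (hz : ‖z‖ < 1) :
    ‖(toHyperboloid z).2‖ ^ 2 = (toHyperboloid z).1 ^ 2 - 1 := by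
  simp only [toHyperboloid, norm_mul, Complex.norm_real, Real.norm_eq_abs, mul_pow, sq_abs]
  linear_combination 4 * phi z * sq_norm_mul_phi hz

lemma sqrt_one_add_sq_norm_toHyperboloid_snd {z : ℂ} (hz : ‖z‖ < 1) :
    √(1 + ‖(toHyperboloid z).2‖ ^ 2) = (toHyperboloid z).1 := by
  rw [sq_norm_toHyperboloid_snd hz, add_sub_cancel,
    Real.sqrt_sq (zero_le_one.trans (one_le_toHyperboloid_fst hz))]

lemma ofHyperboloid_smul_toHyperboloid {s : ℝ} (hs : 0 < s) {z : ℂ} (hz : ‖z‖ < 1) :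
    ofHyperboloid (s • toHyperboloid z) = z := by
  have hq : (s * (toHyperboloid z).1) ^ 2 - ‖s • (toHyperboloid z).2‖ ^ 2 = s ^ 2 := by
    rw [norm_smul, mul_pow, mul_pow, sq_norm_toHyperboloid_snd hz, Real.norm_of_nonneg hs.le]
    ring
  have hphi : 0 < phi z := zero_lt_one.trans_le (one_le_phi hz)
  simp only [ofHyperboloid, Prod.smul_fst, Prod.smul_snd, smul_eq_mul, hq, Real.sqrt_sq hs.le]
  have hne : ((s * (2 * phi z) : ℝ) : ℂ) ≠ 0 := by exact_mod_cast (by positivity)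
  rw [toHyperboloid, show s * (2 * phi z - 1) + s = s * (2 * phi z) by ring, Complex.real_smul,
    ← mul_assoc, ← Complex.ofReal_mul, mul_div_cancel_left₀ z hne]

lemma norm_ofHyperboloid_lt_one {p : ℝ × ℂ} (hp : ‖p.2‖ < p.1) : ‖ofHyperboloid p‖ < 1 := by
  have hs := Real.sqrt_nonneg (p.1 ^ 2 - ‖p.2‖ ^ 2)
  have hd : 0 < p.1 + √(p.1 ^ 2 - ‖p.2‖ ^ 2) := by linarith [norm_nonneg p.2]
  rw [ofHyperboloid, norm_div, Complex.norm_real, Real.norm_of_nonneg hd.le, div_lt_one hd]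
  linarith

lemma phi_ofHyperboloid {p : ℝ × ℂ} (hp : ‖p.2‖ < p.1) :
    phi (ofHyperboloid p) = (p.1 + √(p.1 ^ 2 - ‖p.2‖ ^ 2)) / (2 * √(p.1 ^ 2 - ‖p.2‖ ^ 2)) := by
  have hQ : 0 < p.1 ^ 2 - ‖p.2‖ ^ 2 := by nlinarith [norm_nonneg p.2]
  have hs := Real.sqrt_pos.2 hQ
  have hs2 := Real.sq_sqrt hQ.le
  set s := √(p.1 ^ 2 - ‖p.2‖ ^ 2)
  have hd : 0 < p.1 + s := by linarith [norm_nonneg p.2]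
  rw [phi, ofHyperboloid, norm_div, Complex.norm_real, Real.norm_of_nonneg hd.le]
  field_simp
  rw [show (p.1 + s) ^ 2 - ‖p.2‖ ^ 2 = s * (p.1 + s) * 2 by linear_combination -hs2,
    div_self (by positivity)]

lemma smul_toHyperboloid_ofHyperboloid {p : ℝ × ℂ} (hp : ‖p.2‖ < p.1) :
    √(p.1 ^ 2 - ‖p.2‖ ^ 2) • toHyperboloid (ofHyperboloid p) = p := by
  have hQ : 0 < p.1 ^ 2 - ‖p.2‖ ^ 2 := by nlinarith [norm_nonneg p.2]
  have hs := Real.sqrt_pos.2 hQ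
  have hd : 0 < p.1 + √(p.1 ^ 2 - ‖p.2‖ ^ 2) := by linarith [norm_nonneg p.2]
  rw [toHyperboloid, phi_ofHyperboloid hp, ofHyperboloid]
  set s := √(p.1 ^ 2 - ‖p.2‖ ^ 2)
  ext
  · simp only [Prod.smul_fst, smul_eq_mul]
    field_simp
    ring
  · simp only [Prod.smul_snd, Complex.real_smul]
    have hne : (s : ℂ) * (p.1 + s) ≠ 0 := by exact_mod_cast (by positivity : s * (p.1 + s) ≠ 0)
    push_cast
    field_simp
    exact mul_div_cancel_left₀ _ hne

lemma phi_ofHyperboloid_le {p : ℝ × ℂ} (hp : √(1 + ‖p.2‖ ^ 2) ≤ p.1) :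
    phi (ofHyperboloid p) ≤ (p.1 + 1) / 2 := by
  have hlt : ‖p.2‖ < p.1 := ((Real.lt_sqrt (norm_nonneg _)).2 (by linarith)).trans_le hp
  have h1 : 1 ≤ √(p.1 ^ 2 - ‖p.2‖ ^ 2) := by
    rw [Real.one_le_sqrt]
    linarith [(Real.sqrt_le_iff.1 hp).2]
  rw [phi_ofHyperboloid hlt, div_le_div_iff₀ (by positivity) two_pos]
  nlinarith [norm_nonneg p.2]

lemma sq_norm_one_sub_conj_mul_sub_sq_norm_sub (a z : ℂ) :
    ‖1 - conj a * z‖ ^ 2 - ‖z - a‖ ^ 2 = (1 - ‖a‖ ^ 2) * (1 - ‖z‖ ^ 2) := by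
  simp only [Complex.sq_norm, Complex.normSq_apply, Complex.sub_re, Complex.sub_im,
    Complex.mul_re, Complex.mul_im, Complex.one_re, Complex.one_im, Complex.conj_re,
    Complex.conj_im]
  ring

lemma one_sub_conj_mul_ne_zero {a z : ℂ} (ha : ‖a‖ < 1) (hz : ‖z‖ < 1) : 1 - conj a * z ≠ 0 := by
  have h := sq_norm_one_sub_conj_mul_sub_sq_norm_sub a z
  have := mul_pos (one_sub_sq_norm_pos ha) (one_sub_sq_norm_pos hz)
  intro h0
  rw [h0, norm_zero] at h
  nlinarith [norm_nonneg (z - a)]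

lemma phi_moebAuto {lam a z : ℂ} (hlam : ‖lam‖ = 1) (ha : ‖a‖ < 1) (hz : ‖z‖ < 1) :
    phi (moebAuto lam a z) = ‖1 - conj a * z‖ ^ 2 * phi a * phi z := by
  have hD := norm_pos_iff.2 (one_sub_conj_mul_ne_zero ha hz)
  have h := sq_norm_one_sub_conj_mul_sub_sq_norm_sub a z
  rw [phi, phi, phi, moebAuto, norm_div, norm_mul, hlam, one_mul, div_pow,
    one_sub_div (by positivity), inv_div, h, div_eq_mul_inv, mul_inv, mul_assoc]

lemma norm_moebAuto_lt_one {lam a z : ℂ} (hlam : ‖lam‖ = 1) (ha : ‖a‖ < 1) (hz : ‖z‖ < 1) :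
    ‖moebAuto lam a z‖ < 1 := by
  have hD := norm_pos_iff.2 (one_sub_conj_mul_ne_zero ha hz)
  have h := sq_norm_one_sub_conj_mul_sub_sq_norm_sub a z
  have := mul_pos (one_sub_sq_norm_pos ha) (one_sub_sq_norm_pos hz)
  rw [moebAuto, norm_div, norm_mul, hlam, one_mul, div_lt_one hD]
  nlinarith [norm_nonneg (z - a)]

lemma measurable_moebAuto (lam a : ℂ) : Measurable (moebAuto lam a) := by
  unfold moebAuto
  fun_prop

lemma moebiusLorentz_apply (lam a : ℂ) (p : ℝ × ℂ) :
    moebiusLorentz lam a p = (phi a * ((1 + ‖a‖ ^ 2) * p.1 - 2 * (conj a * p.2).re),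
      phi a * (lam * (p.2 - 2 * p.1 * a + a ^ 2 * conj p.2))) :=
  rfl

lemma toHyperboloid_moebAuto {lam a z : ℂ} (hlam : ‖lam‖ = 1) (ha : ‖a‖ < 1) (hz : ‖z‖ < 1) :
    toHyperboloid (moebAuto lam a z) = moebiusLorentz lam a (toHyperboloid z) := by
  have hA := one_sub_sq_norm_mul_phi ha
  have hZ := sq_norm_mul_phi hz
  have hD : ‖1 - conj a * z‖ ^ 2 = 1 - 2 * (conj a * z).re + ‖a‖ ^ 2 * ‖z‖ ^ 2 := by
    simp only [Complex.sq_norm, Complex.normSq_apply, Complex.sub_re, Complex.sub_im,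
      Complex.mul_re, Complex.mul_im, Complex.one_re, Complex.one_im, Complex.conj_re,
      Complex.conj_im]
    ring
  rw [toHyperboloid, toHyperboloid, phi_moebAuto hlam ha hz, moebiusLorentz_apply]
  ext
  · dsimp only
    rw [mul_left_comm (conj a), Complex.re_ofReal_mul]
    linear_combination (2 * phi a * phi z) * hD + (2 * ‖a‖ ^ 2 * phi a) * hZ + hA
  · have hDne := one_sub_conj_mul_ne_zero ha hz
    have hw : moebAuto lam a z * (1 - conj a * z) = lam * (z - a) := div_mul_cancel₀ _ hDne
    have hnD : (‖1 - conj a * z‖ : ℂ) ^ 2 = (1 - conj a * z) * (1 - a * conj z) := by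
      rw [← Complex.mul_conj', map_sub, map_one, map_mul, Complex.conj_conj]
    have hZc : z * conj z * phi z = phi z - 1 := by
      rw [Complex.mul_conj', ← Complex.ofReal_pow]
      exact_mod_cast hZ
    dsimp only
    push_cast
    simp only [map_mul, map_ofNat, Complex.conj_ofReal]
    linear_combination (2 * phi a * phi z * moebAuto lam a z) * hnD
      + (2 * phi a * phi z * (1 - a * conj z)) * hw - (2 * phi a * lam * a) * hZc

lemma ofHyperboloid_moebiusLorentz {lam a : ℂ} (hlam : ‖lam‖ = 1) (ha : ‖a‖ < 1) {p : ℝ × ℂ}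
    (hp : ‖p.2‖ < p.1) :
    ofHyperboloid (moebiusLorentz lam a p) = moebAuto lam a (ofHyperboloid p) := by
  have hb := norm_ofHyperboloid_lt_one hp
  have hs : 0 < √(p.1 ^ 2 - ‖p.2‖ ^ 2) := Real.sqrt_pos.2 (by nlinarith [norm_nonneg p.2])
  conv_lhs => rw [← smul_toHyperboloid_ofHyperboloid hp]
  rw [map_smul, ← toHyperboloid_moebAuto hlam ha hb,
    ofHyperboloid_smul_toHyperboloid hs (norm_moebAuto_lt_one hlam ha hb)]

lemma norm_coe_lt_one (z : UnitDisk) : ‖(z : ℂ)‖ < 1 := mem_ball_zero_iff.1 z.2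

lemma measurable_of_coe_eq_moebAuto {lam a : ℂ} {g : UnitDisk → UnitDisk}
    (hg : ∀ z : UnitDisk, (g z : ℂ) = moebAuto lam a z) : Measurable g := by
  refine (MeasurableEmbedding.subtype_coe Metric.isOpen_ball.measurableSet).measurable_comp_iff.1 ?_
  rw [show Subtype.val ∘ g = moebAuto lam a ∘ Subtype.val from funext hg]
  exact (measurable_moebAuto lam a).comp measurable_subtype_coe

lemma continuous_phi_coe : Continuous fun z : UnitDisk => phi z :=
  Continuous.inv₀ (by fun_prop) fun z => (one_sub_sq_norm_pos (norm_coe_lt_one z)).ne'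

lemma continuous_toHyperboloid_coe : Continuous fun z : UnitDisk => toHyperboloid z := by
  have := continuous_phi_coe
  unfold toHyperboloid
  fun_prop

-- Taken componentwise so that each coordinate is a scalar integral, to which
-- `ProbabilityMeasure.measurable_integral` applies.
noncomputable def hyperboloidMean (μ : Measure UnitDisk) : ℝ × ℂ :=
  (∫ z, (toHyperboloid z).1 ∂μ, ∫ z, (toHyperboloid z).2 ∂μ)

noncomputable def conformalBarycenter (μ : ProbabilityMeasure UnitDisk) : ℂ :=
  ofHyperboloid (hyperboloidMean μ)

lemma measurable_ofHyperboloid : Measurable ofHyperboloid := by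
  unfold ofHyperboloid
  fun_prop

open ProbabilityMeasure in
lemma measurable_conformalBarycenter :
    Measurable[borel (ProbabilityMeasure UnitDisk)] conformalBarycenter :=
  measurable_ofHyperboloid.comp <|
    (measurable_integral (continuous_fst.comp continuous_toHyperboloid_coe)).prodMk
      (measurable_integral (continuous_snd.comp continuous_toHyperboloid_coe))

variable {μ : ProbabilityMeasure UnitDisk}

lemma integrable_phi (hμ : PhiDisk μ < ⊤) : Integrable (fun z : UnitDisk => phi z) μ :=
  ⟨continuous_phi_coe.aestronglyMeasurable, (hasFiniteIntegral_iff_ofReal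
    (ae_of_all _ fun z => zero_le_one.trans (one_le_phi (norm_coe_lt_one z)))).2 hμ⟩

lemma phiDisk_eq_ofReal_integral (hμ : PhiDisk μ < ⊤) :
    PhiDisk μ = ENNReal.ofReal (∫ z : UnitDisk, phi z ∂μ) :=
  (ofReal_integral_eq_lintegral_ofReal (integrable_phi hμ)
    (ae_of_all _ fun z => zero_le_one.trans (one_le_phi (norm_coe_lt_one z)))).symm

lemma integrable_toHyperboloid_fst (hμ : PhiDisk μ < ⊤) :
    Integrable (fun z : UnitDisk => (toHyperboloid z).1) μ :=
  ((integrable_phi hμ).const_mul 2).sub (integrable_const 1)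

lemma integrable_toHyperboloid_snd (hμ : PhiDisk μ < ⊤) :
    Integrable (fun z : UnitDisk => (toHyperboloid z).2) μ := by
  refine ((integrable_phi hμ).const_mul 2).mono'
    (continuous_snd.comp continuous_toHyperboloid_coe).aestronglyMeasurable
    (ae_of_all _ fun z => ?_)
  have := one_le_phi (norm_coe_lt_one z)
  rw [toHyperboloid, norm_mul, Complex.norm_real, Real.norm_of_nonneg (by linarith)]
  exact mul_le_of_le_one_right (by linarith) (norm_coe_lt_one z).le

lemma integrable_toHyperboloid (hμ : PhiDisk μ < ⊤) :
    Integrable (fun z : UnitDisk => toHyperboloid z) μ :=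
  (integrable_toHyperboloid_fst hμ).prodMk (integrable_toHyperboloid_snd hμ)

lemma hyperboloidMean_eq_integral {ν : Measure UnitDisk}
    (h : Integrable (fun z : UnitDisk => toHyperboloid z) ν) :
    hyperboloidMean ν = ∫ z, toHyperboloid z ∂ν :=
  Prod.ext (fst_integral h).symm (snd_integral h).symm

lemma sqrt_one_add_sq_norm_hyperboloidMean_le (hμ : PhiDisk μ < ⊤) :
    √(1 + ‖(hyperboloidMean μ).2‖ ^ 2) ≤ (hyperboloidMean μ).1 :=
  sqrt_one_add_sq_norm_integral_le (integrable_toHyperboloid_snd hμ)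
    (integrable_toHyperboloid_fst hμ)
    fun z => (sqrt_one_add_sq_norm_toHyperboloid_snd (norm_coe_lt_one z)).le

lemma norm_hyperboloidMean_snd_lt_fst (hμ : PhiDisk μ < ⊤) :
    ‖(hyperboloidMean μ).2‖ < (hyperboloidMean μ).1 :=
  ((Real.lt_sqrt (norm_nonneg _)).2 (by linarith)).trans_le
    (sqrt_one_add_sq_norm_hyperboloidMean_le hμ)

lemma norm_conformalBarycenter_lt_one (hμ : PhiDisk μ < ⊤) : ‖conformalBarycenter μ‖ < 1 :=
  norm_ofHyperboloid_lt_one (norm_hyperboloidMean_snd_lt_fst hμ)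

lemma hyperboloidMean_fst (hμ : PhiDisk μ < ⊤) :
    (hyperboloidMean μ).1 = 2 * ∫ z : UnitDisk, phi z ∂μ - 1 := by
  simp only [hyperboloidMean, toHyperboloid]
  rw [integral_sub ((integrable_phi hμ).const_mul 2) (integrable_const 1), integral_const_mul,
    integral_const, probReal_univ, one_smul]

lemma phi_conformalBarycenter_le (hμ : PhiDisk μ < ⊤) :
    phi (conformalBarycenter μ) ≤ ∫ z : UnitDisk, phi z ∂μ := by
  calc phi (conformalBarycenter μ) ≤ ((hyperboloidMean μ).1 + 1) / 2 :=
        phi_ofHyperboloid_le (sqrt_one_add_sq_norm_hyperboloidMean_le hμ)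
    _ = ∫ z : UnitDisk, phi z ∂μ := by
        rw [hyperboloidMean_fst hμ]
        ring

lemma hyperboloidMean_map {lam a : ℂ} (hlam : ‖lam‖ = 1) (ha : ‖a‖ < 1) {g : UnitDisk → UnitDisk}
    (hg : ∀ z : UnitDisk, (g z : ℂ) = moebAuto lam a z) (hμ : PhiDisk μ < ⊤) :
    hyperboloidMean ((μ : Measure UnitDisk).map g) = moebiusLorentz lam a (hyperboloidMean μ) := by
  have hgm := measurable_of_coe_eq_moebAuto hg
  have hint := integrable_toHyperboloid hμ
  have hcomp : (fun z : UnitDisk => toHyperboloid z) ∘ g =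
      fun z : UnitDisk => moebiusLorentz lam a (toHyperboloid z) :=
    funext fun z => by
      rw [Function.comp_apply, hg z]
      exact toHyperboloid_moebAuto hlam ha (norm_coe_lt_one z)
  have hmeas :=
    continuous_toHyperboloid_coe.aestronglyMeasurable (μ := (μ : Measure UnitDisk).map g)
  have hint' :
      Integrable (fun z : UnitDisk => toHyperboloid z) ((μ : Measure UnitDisk).map g) := by
    rw [integrable_map_measure hmeas hgm.aemeasurable, hcomp]
    exact (moebiusLorentz lam a).integrable_comp hint
  rw [hyperboloidMean_eq_integral hint', hyperboloidMean_eq_integral hint,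
    integral_map hgm.aemeasurable hmeas, ← ContinuousLinearMap.integral_comp_comm _ hint]
  exact congrArg (integral _) hcomp

lemma conformalBarycenter_map {lam a : ℂ} (hlam : ‖lam‖ = 1) (ha : ‖a‖ < 1)
    {g : UnitDisk → UnitDisk} (hg : ∀ z : UnitDisk, (g z : ℂ) = moebAuto lam a z)
    {ν : ProbabilityMeasure UnitDisk} (hμ : PhiDisk μ < ⊤)
    (hν : (ν : Measure UnitDisk) = (μ : Measure UnitDisk).map g) :
    conformalBarycenter ν = moebAuto lam a (conformalBarycenter μ) := by
  rw [conformalBarycenter, hν, hyperboloidMean_map hlam ha hg hμ]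
  exact ofHyperboloid_moebiusLorentz hlam ha (norm_hyperboloidMean_snd_lt_fst hμ)

end ConformalBarycenter

/-- conformal barycenter.  There is a Borel map `𝔅 : M_∞ → 𝔻`
(for the weak-* topology), equivariant under the holomorphic automorphisms of `𝔻`, with
`(1−|𝔅(μ)|²)⁻¹ ≤ Φ(μ)`. -/
theorem stmt17 :
    ∃ B : ProbabilityMeasure UnitDisk → ℂ,
      -- Borel measurability for the weak-* topology
      @Measurable _ _ (borel (ProbabilityMeasure UnitDisk)) _ B ∧
      -- equivariance under holomorphic automorphisms of the disk
      (∀ lam a : ℂ, ‖lam‖ = 1 → ‖a‖ < 1 →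
        ∀ g : UnitDisk → UnitDisk, (∀ z : UnitDisk, (g z : ℂ) = moebAuto lam a (z : ℂ)) →
        ∀ μ ν : ProbabilityMeasure UnitDisk, PhiDisk μ < ⊤ →
          (ν : Measure UnitDisk) = (μ : Measure UnitDisk).map g →
          B ν = moebAuto lam a (B μ)) ∧
      -- the barycenter bound `Φ(δ_{𝔅(μ)}) ≤ Φ(μ)` (in particular `𝔅(μ) ∈ 𝔻`)
      (∀ μ : ProbabilityMeasure UnitDisk, PhiDisk μ < ⊤ →
        ‖B μ‖ < 1 ∧ ENNReal.ofReal ((1 - ‖B μ‖ ^ 2)⁻¹) ≤ PhiDisk μ) := by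
  refine ⟨ConformalBarycenter.conformalBarycenter,
    ConformalBarycenter.measurable_conformalBarycenter,
    fun _ _ hlam ha _ hg _ _ hμ hν => ConformalBarycenter.conformalBarycenter_map hlam ha hg hμ hν,
    fun μ hμ => ⟨ConformalBarycenter.norm_conformalBarycenter_lt_one hμ, ?_⟩⟩
  rw [ConformalBarycenter.phiDisk_eq_ofReal_integral hμ]
  exact ENNReal.ofReal_le_ofReal (ConformalBarycenter.phi_conformalBarycenter_le hμ)
end
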